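/- Let n ≥ 4 be an integer. For 2 ≤ k ≤ ⌊n/2⌋ let B_k := Σ_{T ⊆ {1,…,n}, |T| = k} δ_T ∈ V_n. Then the classes B_2, B_3, …, B_{⌊n/2⌋} form a basis of the subspace of V_n consisting of elements invariant under the natural action of the symmetric group S_n (which permutes the indices {1,…,n} and hence the symbols δ_T). In particular there are no non-trivial S_n-symmetric linear relations among the boundary classes δ_T. (This is the paper's assertion that the Picard group of \bar M_{0,n}/S_n is freely generated by the boundary divisors B_k, and that 'there are no symmetric relations'.) -/

import Mathlib

open Finset

noncomputable section

/-- The free `ℚ`-vector space on the symbols `δ_T`, `T ⊆ {1,…,n}`. -/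
abbrev FreeV (n : ℕ) := Finset (Fin n) →₀ ℚ

/-- The defining relations of the vector space `V_n`:
(i) `δ_T = δ_{Tᶜ}`;  (ii) `δ_T = 0` for `|T| ≤ 1`;
(iii) for distinct `i, j, k, l`,
`Σ_{i,j ∈ T, k,l ∉ T} δ_T = Σ_{i,k ∈ T, j,l ∉ T} δ_T`. -/
def relSet (n : ℕ) : Set (FreeV n) :=
  {x | (∃ T : Finset (Fin n), x = Finsupp.single T 1 - Finsupp.single Tᶜ 1) ∨
       (∃ T : Finset (Fin n), T.card ≤ 1 ∧ x = Finsupp.single T 1) ∨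
       (∃ i j k l : Fin n,
         (i ≠ j ∧ i ≠ k ∧ i ≠ l ∧ j ≠ k ∧ j ≠ l ∧ k ≠ l) ∧
         x = (∑ T ∈ univ.filter
                (fun T : Finset (Fin n) => i ∈ T ∧ j ∈ T ∧ k ∉ T ∧ l ∉ T),
                Finsupp.single T (1 : ℚ)) -
             ∑ T ∈ univ.filter
                (fun T : Finset (Fin n) => i ∈ T ∧ k ∈ T ∧ j ∉ T ∧ l ∉ T),
                Finsupp.single T (1 : ℚ))}

/-- The submodule of relations. -/
def relSub (n : ℕ) : Submodule ℚ (FreeV n) := Submodule.span ℚ (relSet n)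

/-- The `ℚ`-vector space `V_n` spanned by the symbols `δ_T`, `T ⊆ {1,…,n}`,
modulo the relations (i)–(iii); this is the `ℚ`-Picard group of `\bar M_{0,n}`. -/
abbrev V (n : ℕ) := FreeV n ⧸ relSub n

/-- The boundary class `δ_T ∈ V_n`. -/
def delta {n : ℕ} (T : Finset (Fin n)) : V n :=
  Submodule.Quotient.mk (Finsupp.single T 1)

/-- An element of `V_n` is an *effective boundary class* if it is a linear
combination of the classes `δ_T` with nonnegative rational coefficients. -/
def IsEffectiveBoundary {n : ℕ} (x : V n) : Prop :=
  ∃ c : Finset (Fin n) → ℚ, (∀ T, 0 ≤ c T) ∧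
    x = ∑ T : Finset (Fin n), c T • delta T

/-- The permutation action on the free vector space: `δ_T ↦ δ_{σ(T)}`. -/
def permFree (n : ℕ) (σ : Equiv.Perm (Fin n)) : FreeV n →ₗ[ℚ] FreeV n :=
  Finsupp.lmapDomain ℚ ℚ (fun T => T.map σ.toEmbedding)

lemma finset_map_compl {n : ℕ} (σ : Equiv.Perm (Fin n)) (T : Finset (Fin n)) :
    Tᶜ.map σ.toEmbedding = (T.map σ.toEmbedding)ᶜ := by
  ext x
  simp [Finset.mem_map_equiv]

lemma permFree_single {n : ℕ} (σ : Equiv.Perm (Fin n)) (T : Finset (Fin n)) (q : ℚ) :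
    permFree n σ (Finsupp.single T q) = Finsupp.single (T.map σ.toEmbedding) q := by
  simp [permFree, Finsupp.mapDomain_single]

/-- The defining relations of `V_n` are permuted among themselves by `S_n`. -/
lemma relSet_stable {n : ℕ} (σ : Equiv.Perm (Fin n)) :
    ∀ x ∈ relSet n, permFree n σ x ∈ relSet n := by
  rintro x (⟨T, rfl⟩ | ⟨T, hT, rfl⟩ | ⟨i, j, k, l, hd, rfl⟩)
  · left
    refine ⟨T.map σ.toEmbedding, ?_⟩
    rw [map_sub, permFree_single, permFree_single, finset_map_compl]
  · right; left
    refine ⟨T.map σ.toEmbedding, by simpa using hT, ?_⟩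
    rw [permFree_single]
  · right; right
    obtain ⟨h1, h2, h3, h4, h5, h6⟩ := hd
    refine ⟨σ i, σ j, σ k, σ l,
      ⟨fun h => h1 (σ.injective h), fun h => h2 (σ.injective h),
       fun h => h3 (σ.injective h), fun h => h4 (σ.injective h),
       fun h => h5 (σ.injective h), fun h => h6 (σ.injective h)⟩, ?_⟩
    rw [map_sub, map_sum, map_sum]
    simp_rw [permFree_single]
    congr 1
    · refine Finset.sum_equiv σ.finsetCongr ?_ ?_
      · intro T
        simp [Finset.mem_map_equiv]
      · intro T _
        simp
    · refine Finset.sum_equiv σ.finsetCongr ?_ ?_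
      · intro T
        simp [Finset.mem_map_equiv]
      · intro T _
        simp

/-- The action of a permutation `σ ∈ S_n` on `V_n`, sending `δ_T` to `δ_{σ(T)}`;
it is well defined since the defining relations are permuted among themselves. -/
def permV (n : ℕ) (σ : Equiv.Perm (Fin n)) : V n →ₗ[ℚ] V n :=
  Submodule.mapQ (relSub n) (relSub n) (permFree n σ) (by
    rw [relSub, Submodule.span_le]
    intro x hx
    simp only [SetLike.mem_coe, Submodule.mem_comap]
    exact Submodule.subset_span (relSet_stable σ x hx))

/-- The subspace of `V_n` of elements invariant under the natural `S_n`-action. -/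
def invariants (n : ℕ) : Submodule ℚ (V n) :=
  ⨅ σ : Equiv.Perm (Fin n), LinearMap.eqLocus (permV n σ) LinearMap.id

/-- The symmetrized boundary class `B_k = Σ_{|T| = k} δ_T ∈ V_n`. -/
def Bclass (n k : ℕ) : V n :=
  ∑ T ∈ univ.filter (fun T : Finset (Fin n) => T.card = k), delta T

/-!
Each `B_k` is the sum of `δ_T` over an `S_n`-orbit, hence invariant.

For independence, note that a weight `f(|T|)` with `f(k) = f(n - k)` and `f = 0` on `k ≤ 1`
kills all relations (relation (iii) is exchanged with itself by the transposition `(j k)`),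
so it defines a functional on `V_n`; the indicator of `{m, n - m}` is then dual to `B_m`.

For spanning, average an invariant class over `S_n`: the orbit sum `Σ_σ δ_{σ(T)}` is a
multiple of `B_{|T|}`, and `B_k = B_{n-k}`, `B_k = 0` for `k ≤ 1`, reduce every `B_k` to
`2 ≤ k ≤ ⌊n/2⌋`.
-/

open scoped Nat Pointwise

section

variable {n : ℕ}

lemma delta_compl (T : Finset (Fin n)) : delta Tᶜ = delta T := by
  rw [delta, delta, eq_comm, Submodule.Quotient.eq]
  exact Submodule.subset_span (Or.inl ⟨T, rfl⟩)

lemma delta_eq_zero_of_card_le_one {T : Finset (Fin n)} (hT : #T ≤ 1) : delta T = 0 := by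
  rw [delta, Submodule.Quotient.mk_eq_zero]
  exact Submodule.subset_span (Or.inr (Or.inl ⟨T, hT, rfl⟩))

lemma mk_single_eq_smul_delta (T : Finset (Fin n)) (q : ℚ) :
    (Submodule.Quotient.mk (Finsupp.single T q) : V n) = q • delta T := by
  rw [delta, ← Submodule.Quotient.mk_smul, Finsupp.smul_single_one]

lemma permV_delta (σ : Equiv.Perm (Fin n)) (T : Finset (Fin n)) :
    permV n σ (delta T) = delta (T.map σ.toEmbedding) := by
  rw [delta, delta, permV, Submodule.mapQ_apply, permFree_single]

lemma permV_Bclass (σ : Equiv.Perm (Fin n)) (k : ℕ) : permV n σ (Bclass n k) = Bclass n k := by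
  rw [Bclass, map_sum]
  simp_rw [permV_delta]
  exact sum_equiv σ.finsetCongr (by simp) (fun _ _ => rfl)

lemma Bclass_mem_invariants (k : ℕ) : Bclass n k ∈ invariants n :=
  Submodule.mem_iInf _ |>.2 fun σ => permV_Bclass σ k

lemma Bclass_sub {k : ℕ} (hk : k ≤ n) : Bclass n (n - k) = Bclass n k := by
  refine sum_nbij' compl compl (fun T hT => ?_) (fun T hT => ?_)
    (fun T _ => compl_compl T) (fun T _ => compl_compl T) (fun T _ => (delta_compl T).symm)
  all_goals
    simp only [mem_filter, mem_univ, true_and] at hT ⊢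
    rw [card_compl, Fintype.card_fin]
    omega

lemma Bclass_eq_zero_of_le_one {k : ℕ} (hk : k ≤ 1) : Bclass n k = 0 :=
  sum_eq_zero fun _ hT => delta_eq_zero_of_card_le_one ((mem_filter.1 hT).2 ▸ hk)

lemma Bclass_eq_zero_of_lt {k : ℕ} (hk : n < k) : Bclass n k = 0 := by
  rw [Bclass, univ_filter_card_eq, powersetCard_eq_empty.2 (by simpa using hk), sum_empty]

lemma Bclass_mem_span (j : ℕ) :
    Bclass n j ∈ Submodule.span ℚ
      (Set.range fun k : ↥(Finset.Icc 2 (n / 2)) => Bclass n (k : ℕ)) := by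
  wlog hj : j ≤ n / 2 generalizing j
  · rcases le_or_gt j n with hjn | hjn
    · exact Bclass_sub hjn ▸ this (n - j) (by omega)
    · exact Bclass_eq_zero_of_lt hjn ▸ zero_mem _
  rcases le_or_gt j 1 with hj1 | hj1
  · exact Bclass_eq_zero_of_le_one hj1 ▸ zero_mem _
  · exact Submodule.subset_span ⟨⟨j, mem_Icc.2 ⟨hj1, hj⟩⟩, rfl⟩

end

/-- A weight on sizes of subsets that is compatible with relations (i) and (ii). -/
def IsBoundaryWeight (n : ℕ) (f : ℕ → ℚ) : Prop :=
  (∀ k ≤ n, f (n - k) = f k) ∧ ∀ k ≤ 1, f k = 0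

section

variable {n : ℕ} {f : ℕ → ℚ}

lemma relSub_le_ker_linearCombination (hf : IsBoundaryWeight n f) :
    relSub n ≤ LinearMap.ker (Finsupp.linearCombination ℚ fun T : Finset (Fin n) => f #T) := by
  rw [relSub, Submodule.span_le]
  rintro x (⟨T, rfl⟩ | ⟨T, hT, rfl⟩ | ⟨i, j, k, l, ⟨hij, hik, -, hjk, hjl, hkl⟩, rfl⟩) <;>
    simp only [SetLike.mem_coe, LinearMap.mem_ker, map_sub, map_sum,
      Finsupp.linearCombination_single, one_smul, sub_eq_zero]
  · rw [card_compl, Fintype.card_fin, hf.1 _ (card_le_univ T |>.trans_eq (Fintype.card_fin n))]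
  · exact hf.2 _ hT
  · refine sum_equiv (Equiv.swap j k).finsetCongr (fun T => ?_) (fun T _ => by simp)
    simp only [mem_filter, mem_univ, true_and, Equiv.finsetCongr_apply, mem_map_equiv,
      Equiv.symm_swap, Equiv.swap_apply_of_ne_of_ne hij hik, Equiv.swap_apply_left,
      Equiv.swap_apply_right, Equiv.swap_apply_of_ne_of_ne hjl.symm hkl.symm]

def cardWeight (hf : IsBoundaryWeight n f) : V n →ₗ[ℚ] ℚ :=
  (relSub n).liftQ _ (relSub_le_ker_linearCombination hf)

lemma cardWeight_delta (hf : IsBoundaryWeight n f) (T : Finset (Fin n)) :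
    cardWeight hf (delta T) = f #T := by
  simp [cardWeight, delta]

lemma cardWeight_Bclass (hf : IsBoundaryWeight n f) (k : ℕ) :
    cardWeight hf (Bclass n k) = n.choose k * f k := by
  rw [Bclass, map_sum, sum_congr rfl fun T hT => (cardWeight_delta hf T).trans
    (congrArg f (mem_filter.1 hT).2), sum_const, univ_filter_card_eq, card_powersetCard,
    card_univ, Fintype.card_fin, nsmul_eq_mul]

lemma isBoundaryWeight_indicator {m : ℕ} (hm : m ∈ Icc 2 (n / 2)) :
    IsBoundaryWeight n fun k => if k = m ∨ k = n - m then 1 else 0 := by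
  rw [mem_Icc] at hm
  exact ⟨fun k hk => if_congr (by omega) rfl rfl, fun k hk => if_neg (by omega)⟩

end

lemma linearIndependent_Bclass (n : ℕ) :
    LinearIndependent ℚ (fun k : ↥(Finset.Icc 2 (n / 2)) => Bclass n (k : ℕ)) := by
  refine Fintype.linearIndependent_iff.2 fun g hg m => ?_
  have hm := mem_Icc.1 m.2
  have hf := isBoundaryWeight_indicator m.2
  have hcoeff := congrArg (cardWeight hf) hg
  simp only [map_sum, map_smul, map_zero, cardWeight_Bclass, smul_eq_mul] at hcoeff
  rw [Fintype.sum_eq_single m fun i hi => by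
    have := mem_Icc.1 i.2
    have : (i : ℕ) ≠ m := Subtype.coe_ne_coe.2 hi
    rw [if_neg (by omega), mul_zero, mul_zero], if_pos (Or.inl rfl), mul_one] at hcoeff
  exact (mul_eq_zero.1 hcoeff).resolve_right (Nat.cast_ne_zero.2 (Nat.choose_pos (by omega)).ne')

def symmetrize (n : ℕ) : V n →ₗ[ℚ] V n := ∑ σ : Equiv.Perm (Fin n), permV n σ

section

variable {n : ℕ}

lemma symmetrize_of_mem_invariants {x : V n} (hx : x ∈ invariants n) :
    symmetrize n x = (n ! : ℚ) • x := by
  have hfix : ∀ σ, permV n σ x = x := (Submodule.mem_iInf _).1 hx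
  rw [symmetrize, LinearMap.sum_apply, sum_congr rfl fun σ _ => hfix σ, sum_const, card_univ,
    Fintype.card_perm, Fintype.card_fin, Nat.cast_smul_eq_nsmul]

lemma exists_perm_map_eq {S T : Finset (Fin n)} (h : #S = #T) :
    ∃ τ : Equiv.Perm (Fin n), T.map τ.toEmbedding = S := by
  have := Set.powersetCard.isPretransitive (α := Fin n) (n := #T)
  obtain ⟨τ, hτ⟩ := MulAction.exists_smul_eq (Equiv.Perm (Fin n))
    (⟨T, rfl⟩ : Set.powersetCard (Fin n) #T) ⟨S, h⟩
  refine ⟨τ, Eq.trans ?_ (congrArg Subtype.val hτ)⟩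
  rw [map_eq_image]
  rfl

lemma sum_delta_map_eq_of_card_eq {S T : Finset (Fin n)} (h : #S = #T) :
    ∑ σ : Equiv.Perm (Fin n), delta (S.map σ.toEmbedding) =
      ∑ σ : Equiv.Perm (Fin n), delta (T.map σ.toEmbedding) := by
  obtain ⟨τ, rfl⟩ := exists_perm_map_eq h
  refine Fintype.sum_equiv (Equiv.mulRight τ) _ _ fun σ => ?_
  rw [map_map]
  rfl

lemma symmetrize_delta (T : Finset (Fin n)) :
    symmetrize n (delta T) = ∑ σ : Equiv.Perm (Fin n), delta (T.map σ.toEmbedding) := by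
  simp only [symmetrize, LinearMap.sum_apply, permV_delta]

lemma choose_smul_symmetrize_delta (T : Finset (Fin n)) :
    (n.choose #T : ℚ) • symmetrize n (delta T) = (n ! : ℚ) • Bclass n #T := calc
  _ = ∑ S ∈ univ.powersetCard #T, ∑ σ : Equiv.Perm (Fin n), delta (S.map σ.toEmbedding) := by
    rw [sum_congr rfl fun S hS => sum_delta_map_eq_of_card_eq (mem_powersetCard_univ.1 hS),
      sum_const, card_powersetCard, card_univ, Fintype.card_fin, Nat.cast_smul_eq_nsmul,
      symmetrize_delta]
  _ = symmetrize n (Bclass n #T) := by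
    rw [sum_comm, symmetrize, LinearMap.sum_apply]
    simp only [Bclass, univ_filter_card_eq, map_sum, permV_delta]
  _ = (n ! : ℚ) • Bclass n #T := symmetrize_of_mem_invariants (Bclass_mem_invariants _)

lemma symmetrize_mem_span (x : V n) :
    symmetrize n x ∈ Submodule.span ℚ
      (Set.range fun k : ↥(Finset.Icc 2 (n / 2)) => Bclass n (k : ℕ)) := by
  obtain ⟨y, rfl⟩ := Submodule.Quotient.mk_surjective _ x
  induction y using Finsupp.induction_linear with
  | zero => simp
  | add y z hy hz => simpa using add_mem hy hz
  | single T q =>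
    have hchoose : (n.choose #T : ℚ) ≠ 0 :=
      Nat.cast_ne_zero.2 (Nat.choose_pos (card_le_univ T |>.trans_eq (Fintype.card_fin n))).ne'
    rw [mk_single_eq_smul_delta, map_smul, ← inv_smul_smul₀ hchoose (symmetrize n (delta T)),
      choose_smul_symmetrize_delta]
    exact Submodule.smul_mem _ _ (Submodule.smul_mem _ _ (Submodule.smul_mem _ _
      (Bclass_mem_span _)))

lemma invariants_le_span :
    invariants n ≤ Submodule.span ℚ
      (Set.range fun k : ↥(Finset.Icc 2 (n / 2)) => Bclass n (k : ℕ)) := fun x hx => by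
  rw [← inv_smul_smul₀ (Nat.cast_ne_zero.2 n.factorial_ne_zero : (n ! : ℚ) ≠ 0) x,
    ← symmetrize_of_mem_invariants hx]
  exact Submodule.smul_mem _ _ (symmetrize_mem_span x)

end

theorem Bclasses_basis_of_invariants_general (n : ℕ) :
    (∀ k ∈ Finset.Icc 2 (n / 2), Bclass n k ∈ invariants n) ∧
    LinearIndependent ℚ (fun k : ↥(Finset.Icc 2 (n / 2)) => Bclass n (k : ℕ)) ∧
    Submodule.span ℚ
        (Set.range fun k : ↥(Finset.Icc 2 (n / 2)) => Bclass n (k : ℕ)) =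
      invariants n :=
  ⟨fun k _ => Bclass_mem_invariants k, linearIndependent_Bclass n,
    le_antisymm (Submodule.span_le.2 (Set.range_subset_iff.2 fun k => Bclass_mem_invariants k))
      invariants_le_span⟩

/-- **The classes `B_2, …, B_{⌊n/2⌋}` freely generate the `S_n`-invariant
subspace of `V_n`** (the Picard group of `\bar M_{0,n}/S_n` is freely generated
by the boundary divisors `B_k`): each `B_k` (`2 ≤ k ≤ ⌊n/2⌋`) is invariant,
they are linearly independent — so in particular there are no non-trivial
`S_n`-symmetric linear relations among the boundary classes `δ_T` — and they
span the invariant subspace. -/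
theorem Bclasses_basis_of_invariants (n : ℕ) (hn : 4 ≤ n) :
    (∀ k ∈ Finset.Icc 2 (n / 2), Bclass n k ∈ invariants n) ∧
    LinearIndependent ℚ (fun k : ↥(Finset.Icc 2 (n / 2)) => Bclass n (k : ℕ)) ∧
    Submodule.span ℚ
        (Set.range fun k : ↥(Finset.Icc 2 (n / 2)) => Bclass n (k : ℕ)) =
      invariants n :=
  Bclasses_basis_of_invariants_general n

end
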